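/- Let ζ₁,…,ζ_L be strictly positive random variables, each with finite mean, and let c > 0. Then E[log₂(1 + c·(∑ᵢ 1/√ζᵢ)²)] > log₂(c·(∑ᵢ 1/√(E ζᵢ))²), provided the left-hand expectation exists and E[ln ζᵢ] is finite for each i. -/

import Mathlib

/-!
With `m i = E ζᵢ` and weights `wᵢ ∝ 1/√(m i)`, concavity of `log` on a finite sum gives the
pointwise bound `log ∑ᵢ 1/√ζᵢ ≥ ∑ᵢ wᵢ (log (1/√ζᵢ) - log wᵢ)`. Taking expectations and using
Jensen's inequality `E[log ζᵢ] ≤ log E ζᵢ` for each summand turns the right side into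
`log ∑ᵢ 1/√(m i)`, so `E[log (c (∑ᵢ 1/√ζᵢ)²)] ≥ log (c (∑ᵢ 1/√(m i))²)`; adding `1` inside
the logarithm on the left makes the inequality strict.
-/

open MeasureTheory Real

theorem Real.sum_mul_sub_log_le_log_sum {ι : Type*} (s : Finset ι) {w x : ι → ℝ}
    (hw : ∀ i ∈ s, 0 < w i) (hx : ∀ i ∈ s, 0 < x i) (hws : ∑ i ∈ s, w i = 1) :
    ∑ i ∈ s, w i * (log (x i) - log (w i)) ≤ log (∑ i ∈ s, x i) := by
  have hjensen := strictConcaveOn_log_Ioi.concaveOn.le_map_sum (p := fun i => x i / w i)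
    (fun i hi => (hw i hi).le) hws (fun i hi => Set.mem_Ioi.2 (div_pos (hx i hi) (hw i hi)))
  calc ∑ i ∈ s, w i * (log (x i) - log (w i))
      = ∑ i ∈ s, w i • log (x i / w i) :=
        Finset.sum_congr rfl fun i hi => by
          rw [smul_eq_mul, log_div (hx i hi).ne' (hw i hi).ne']
    _ ≤ log (∑ i ∈ s, w i • (x i / w i)) := hjensen
    _ = log (∑ i ∈ s, x i) := by
        congr 1
        exact Finset.sum_congr rfl fun i hi => by
          rw [smul_eq_mul, mul_div_cancel₀ _ (hw i hi).ne']

theorem Real.log_one_div_sqrt {z : ℝ} (hz : 0 ≤ z) : log (1 / √z) = -(1 / 2) * log z := by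
  rw [one_div, log_inv, log_sqrt hz]
  ring

namespace MeasureTheory

variable {Ω : Type*} [MeasurableSpace Ω] {μ : Measure Ω}

theorem integral_pos_of_ae_pos [NeZero μ] {f : Ω → ℝ} (hf : ∀ᵐ ω ∂μ, 0 < f ω)
    (hfi : Integrable f μ) : 0 < ∫ ω, f ω ∂μ := by
  rw [integral_pos_iff_support_of_nonneg_ae (hf.mono fun _ h => h.le) hfi]
  have hsupp : Function.support f =ᵐ[μ] (Set.univ : Set Ω) :=
    Filter.eventuallyEq_univ.2 (hf.mono fun _ h => h.ne')
  rw [measure_congr hsupp]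
  exact NeZero.pos _

theorem integral_lt_integral_of_ae_lt [NeZero μ] {f g : Ω → ℝ} (hf : Integrable f μ)
    (hg : Integrable g μ) (hfg : ∀ᵐ ω ∂μ, f ω < g ω) : ∫ ω, f ω ∂μ < ∫ ω, g ω ∂μ := by
  have := integral_pos_of_ae_pos (hfg.mono fun _ h => sub_pos.2 h) (hg.sub hf)
  rw [integral_sub hg hf] at this
  linarith

theorem log_one_div_sqrt_ae_eq {f : Ω → ℝ} (hf : ∀ᵐ ω ∂μ, 0 < f ω) :
    (fun ω => log (1 / √(f ω))) =ᵐ[μ] fun ω => -(1 / 2) * log (f ω) :=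
  hf.mono fun _ h => log_one_div_sqrt h.le

variable [IsProbabilityMeasure μ]

/-- Jensen's inequality for `log`, which is concave on the open set `(0, ∞)` only, so that
`ConcaveOn.le_map_integral` does not apply. -/
theorem integral_log_le_log_integral {f : Ω → ℝ} (hf : ∀ᵐ ω ∂μ, 0 < f ω)
    (hfi : Integrable f μ) (hlog : Integrable (fun ω => log (f ω)) μ) :
    ∫ ω, log (f ω) ∂μ ≤ log (∫ ω, f ω ∂μ) := by
  set m := ∫ ω, f ω ∂μ
  have hm : 0 < m := integral_pos_of_ae_pos hf hfi
  -- tangent line of `log` at `m`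
  have htangent : ∀ᵐ ω ∂μ, log (f ω) ≤ f ω / m + (log m - 1) := by
    filter_upwards [hf] with ω hω
    have := log_le_sub_one_of_pos (div_pos hω hm)
    rw [log_div hω.ne' hm.ne'] at this
    linarith
  calc ∫ ω, log (f ω) ∂μ ≤ ∫ ω, (f ω / m + (log m - 1)) ∂μ :=
        integral_mono_ae hlog ((hfi.div_const m).add (integrable_const _)) htangent
    _ = log m := by
        rw [integral_add (hfi.div_const m) (integrable_const _), integral_div, integral_const,
          probReal_univ, one_smul, div_self hm.ne']
        ring

theorem log_one_div_sqrt_integral_le {f : Ω → ℝ} (hf : ∀ᵐ ω ∂μ, 0 < f ω)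
    (hfi : Integrable f μ) (hlog : Integrable (fun ω => log (f ω)) μ) :
    log (1 / √(∫ ω, f ω ∂μ)) ≤ ∫ ω, log (1 / √(f ω)) ∂μ := by
  rw [integral_congr_ae (log_one_div_sqrt_ae_eq hf), integral_const_mul,
    log_one_div_sqrt (integral_pos_of_ae_pos hf hfi).le]
  linarith [integral_log_le_log_integral hf hfi hlog]

theorem log_sum_lt_integral_of_log_le_integral_log {ι : Type*} [Fintype ι] [Nonempty ι]
    {x : ι → Ω → ℝ} {a : ι → ℝ} {F : Ω → ℝ} (ha : ∀ i, 0 < a i)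
    (hx : ∀ i, ∀ᵐ ω ∂μ, 0 < x i ω) (hlogx : ∀ i, Integrable (fun ω => log (x i ω)) μ)
    (hle : ∀ i, log (a i) ≤ ∫ ω, log (x i ω) ∂μ) (hF : Integrable F μ)
    (hlt : ∀ᵐ ω ∂μ, log (∑ i, x i ω) < F ω) :
    log (∑ i, a i) < ∫ ω, F ω ∂μ := by
  set A := ∑ i, a i
  have hA : 0 < A := Finset.sum_pos (fun i _ => ha i) Finset.univ_nonempty
  -- with these weights the concavity bound is an equality at `x = a`
  set w : ι → ℝ := fun i => a i / A
  have hw : ∀ i, 0 < w i := fun i => div_pos (ha i) hA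
  have hws : ∑ i, w i = 1 := by rw [← Finset.sum_div, div_self hA.ne']
  have hlogw : ∀ i, log (a i) - log (w i) = log A := fun i => by
    rw [log_div (ha i).ne' hA.ne']; ring
  set g : Ω → ℝ := fun ω => ∑ i, w i * (log (x i ω) - log (w i))
  have hterm : ∀ i, Integrable (fun ω => w i * (log (x i ω) - log (w i))) μ := fun i =>
    ((hlogx i).sub (integrable_const _)).const_mul (w i)
  have hgi : Integrable g μ := integrable_finsetSum _ fun i _ => hterm i
  have hgF : ∀ᵐ ω ∂μ, g ω < F ω := by
    filter_upwards [ae_all_iff.2 hx, hlt] with ω hxω hltω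
    exact (sum_mul_sub_log_le_log_sum _ (fun i _ => hw i) (fun i _ => hxω i) hws).trans_lt hltω
  have hlogA : log A ≤ ∫ ω, g ω ∂μ := by
    rw [integral_finsetSum _ fun i _ => hterm i]
    calc log A = ∑ i, w i * (log (a i) - log (w i)) := by
          simp only [hlogw, ← Finset.sum_mul, hws, one_mul]
      _ ≤ ∑ i, ∫ ω, w i * (log (x i ω) - log (w i)) ∂μ := by
          refine Finset.sum_le_sum fun i _ => ?_
          rw [integral_const_mul, integral_sub (hlogx i) (integrable_const _), integral_const,
            probReal_univ, one_smul]
          gcongr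
          exacts [(hw i).le, hle i]
  exact hlogA.trans_lt (integral_lt_integral_of_ae_lt hgi hF hgF)

end MeasureTheory

/-- Lemma 1 with SNR scaling constant `c = P_R/N₀`: for strictly positive
integrable random variables `ζᵢ` with integrable logarithm,
`E[log₂(1 + c·(∑ᵢ 1/√ζᵢ)²)] > log₂(c·(∑ᵢ 1/√(E ζᵢ))²)`. -/
theorem stmt14 {Ω : Type*} [MeasureSpace Ω] (μ : Measure Ω) [IsProbabilityMeasure μ]
    (L : ℕ) (hL : 0 < L) (c : ℝ) (hc : 0 < c) (ζ : Fin L → Ω → ℝ)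
    (hpos : ∀ i, ∀ᵐ ω ∂μ, 0 < ζ i ω)
    (hint : ∀ i, Integrable (ζ i) μ)
    (hlog : ∀ i, Integrable (fun ω => Real.log (ζ i ω)) μ)
    (hintLHS : Integrable
      (fun ω => Real.logb 2 (1 + c * (∑ i, 1 / Real.sqrt (ζ i ω)) ^ 2)) μ) :
    (∫ ω, Real.logb 2 (1 + c * (∑ i, 1 / Real.sqrt (ζ i ω)) ^ 2) ∂μ) >
      Real.logb 2 (c * (∑ i, 1 / Real.sqrt (∫ ω, ζ i ω ∂μ)) ^ 2) := by
  have : Nonempty (Fin L) := ⟨⟨0, hL⟩⟩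
  set S : Ω → ℝ := fun ω => ∑ i, 1 / √(ζ i ω)
  set F : Ω → ℝ := fun ω => logb 2 (1 + c * S ω ^ 2)
  have hm : ∀ i, 0 < ∫ ω, ζ i ω ∂μ := fun i => integral_pos_of_ae_pos (hpos i) (hint i)
  -- `log (c S²) < log (1 + c S²) = log 2 * F`, solved for `log S`
  have hlt : ∀ᵐ ω ∂μ, log (S ω) < (log 2 * F ω - log c) / 2 := by
    filter_upwards [ae_all_iff.2 hpos] with ω hω
    have hS : 0 < S ω := Finset.sum_pos (fun i _ => by have := hω i; positivity)
      Finset.univ_nonempty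
    have := log_lt_log (by positivity) (lt_one_add (c * S ω ^ 2))
    rw [log_mul hc.ne' (by positivity), log_pow] at this
    simp only [F, logb, mul_div_cancel₀ _ (log_pos one_lt_two).ne']
    push_cast at this
    linarith
  have key := log_sum_lt_integral_of_log_le_integral_log (F := fun ω => (log 2 * F ω - log c) / 2)
    (fun i => one_div_pos.2 (sqrt_pos.2 (hm i))) (fun i => (hpos i).mono fun _ h => by positivity)
    (fun i => ((hlog i).const_mul _).congr (log_one_div_sqrt_ae_eq (hpos i)).symm)
    (fun i => log_one_div_sqrt_integral_le (hpos i) (hint i) (hlog i))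
    (((hintLHS.const_mul (log 2)).sub (integrable_const _)).div_const 2) hlt
  rw [integral_div, integral_sub (hintLHS.const_mul _) (integrable_const _), integral_const_mul,
    integral_const, probReal_univ, one_smul] at key
  have hT : 0 < ∑ i, 1 / √(∫ ω, ζ i ω ∂μ) :=
    Finset.sum_pos (fun i _ => one_div_pos.2 (sqrt_pos.2 (hm i))) Finset.univ_nonempty
  rw [gt_iff_lt, logb, log_mul hc.ne' (by positivity), log_pow,
    div_lt_iff₀ (log_pos one_lt_two)]
  push_cast
  linarith
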